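/- There exists a permutation matrix P ∈ GL_{2N+2}(ℝ) (namely the matrix of the cycle permuting the first N+1 indices cyclically and fixing the rest) such that for every (M,X,κ) ∈ G̃^J_N, the conjugate P·ι(M,X,κ)·P⁻¹ of the embedded matrix ι(M,X,κ) = [[I_N, X, κ], [0, M, −M·J₂·Xᵀ], [0, 0, I_N]] is symplectic, i.e. satisfies gᵀ·J_{2N+2}·g = J_{2N+2} where J_{2N+2} = [[0, −I_{N+1}], [I_{N+1}, 0]]. -/

import Mathlib

open Matrix Complex

noncomputable section

def J2 : Matrix (Fin 2) (Fin 2) ℝ := !![0, -1; 1, 0]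

/-- An element of the (centrally extended) Jacobi group data: a triple (M, X, κ). -/
structure JTriple (N : ℕ) where
  M : Matrix (Fin 2) (Fin 2) ℝ
  X : Matrix (Fin N) (Fin 2) ℝ
  κ : Matrix (Fin N) (Fin N) ℝ

/-- Membership in the centrally extended real Jacobi group `G̃^J_N`. -/
def JTriple.IsMem {N : ℕ} (g : JTriple N) : Prop :=
  g.M.det = 1 ∧ (g.κ + (2⁻¹ : ℝ) • (g.X * J2 * g.X.transpose)).IsSymm

/-- The embedding `ι` of `G̃^J_N` into (2N+2)×(2N+2) real matrices, with blocks of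
sizes N, 2, N: `[[I_N, X, κ], [0, M, −M·J₂·Xᵀ], [0, 0, I_N]]`. -/
def jIota {N : ℕ} (g : JTriple N) :
    Matrix (Fin N ⊕ (Fin 2 ⊕ Fin N)) (Fin N ⊕ (Fin 2 ⊕ Fin N)) ℝ :=
  fromBlocks 1 (fromCols g.X g.κ) 0
    (fromBlocks g.M (-(g.M * J2 * g.X.transpose)) 0 1)

/-- The standard symplectic form `J_{2N+2} = [[0, −I_{N+1}], [I_{N+1}, 0]]`. -/
def Jsymp (N : ℕ) : Matrix (Fin (N + 1) ⊕ Fin (N + 1)) (Fin (N + 1) ⊕ Fin (N + 1)) ℝ :=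
  fromBlocks 0 (-1) 1 0

/-! In coordinates `(x, (u, v), y)` with `x, y ∈ ℝᴺ`, the permutation puts `(x, u)` first and
`(y, v)` second, so `J_{2N+2}` pulls back to the form `[[0, 0, -1], [0, J₂, 0], [1, 0, 0]]`.
Preserving it under `ι(M, X, κ)` amounts to `Mᵀ J₂ M = (det M) J₂ = J₂` on the middle block and,
on the corner block, to `κ - κᵀ = -X J₂ Xᵀ`, which is the symmetry of `κ + ½ X J₂ Xᵀ`. -/

lemma J2_mul_J2 : J2 * J2 = -1 := by
  ext i j; fin_cases i <;> fin_cases j <;> simp [J2, Matrix.mul_apply, Fin.sum_univ_succ]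

lemma J2_transpose : J2ᵀ = -J2 := by
  ext i j; fin_cases i <;> fin_cases j <;> simp [J2]

lemma transpose_mul_J2_mul (M : Matrix (Fin 2) (Fin 2) ℝ) : Mᵀ * J2 * M = M.det • J2 := by
  ext i j; fin_cases i <;> fin_cases j <;>
    simp [J2, Matrix.det_fin_two, Matrix.mul_apply, Fin.sum_univ_succ] <;> ring

lemma JTriple.IsMem.κ_sub_transpose {N : ℕ} {g : JTriple N} (hg : g.IsMem) :
    g.κ - g.κᵀ = -(g.X * J2 * g.Xᵀ) := by
  have hskew : (g.X * J2 * g.Xᵀ)ᵀ = -(g.X * J2 * g.Xᵀ) := by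
    simp [Matrix.transpose_mul, J2_transpose, Matrix.mul_assoc]
  have h := hg.2
  rw [Matrix.IsSymm, Matrix.transpose_add, Matrix.transpose_smul, hskew, smul_neg] at h
  ext i j
  have hij := congrFun₂ h i j
  simp only [Matrix.add_apply, Matrix.neg_apply, Matrix.smul_apply, smul_eq_mul] at hij
  simp only [Matrix.sub_apply, Matrix.neg_apply]
  linarith

def jForm (N : ℕ) : Matrix (Fin N ⊕ (Fin 2 ⊕ Fin N)) (Fin N ⊕ (Fin 2 ⊕ Fin N)) ℝ :=
  fromBlocks 0 (fromCols 0 (-1)) (fromRows 0 1) (fromBlocks J2 0 0 0)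

lemma jIota_transpose_mul_jForm_mul_jIota {N : ℕ} {g : JTriple N} (hg : g.IsMem) :
    (jIota g)ᵀ * jForm N * jIota g = jForm N := by
  obtain ⟨M, X, κ⟩ := g
  have hM : Mᵀ * J2 * M = J2 := by rw [transpose_mul_J2_mul, hg.1, one_smul]
  have hMJ : ∀ A : Matrix (Fin N) (Fin 2) ℝ, A * Mᵀ * J2 * M = A * J2 := fun A => by
    rw [Matrix.mul_assoc A, Matrix.mul_assoc A, hM]
  have hBt : (-(M * J2 * Xᵀ))ᵀ = X * J2 * Mᵀ := by
    simp [Matrix.transpose_mul, J2_transpose, Matrix.mul_assoc]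
  have hMB : Mᵀ * J2 * -(M * J2 * Xᵀ) = Xᵀ := by
    simp [← Matrix.mul_assoc, hM, J2_mul_J2]
  have hBM : (-(M * J2 * Xᵀ))ᵀ * J2 * M = -X := by
    rw [hBt, hMJ, Matrix.mul_assoc, J2_mul_J2, Matrix.mul_neg, Matrix.mul_one]
  have hBB : (-(M * J2 * Xᵀ))ᵀ * J2 * -(M * J2 * Xᵀ) = X * J2 * Xᵀ := by
    rw [hBt]; simp [← Matrix.mul_assoc, hMJ, Matrix.mul_assoc X J2 J2, J2_mul_J2]
  have hκ : κ + (X * J2 * Xᵀ + -κᵀ) = 0 := by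
    rw [← sub_eq_add_neg, add_sub_left_comm, hg.κ_sub_transpose, add_neg_cancel]
  simp only [jIota, jForm, Matrix.fromBlocks_transpose, Matrix.transpose_fromCols,
    Matrix.fromBlocks_multiply, Matrix.transpose_zero, Matrix.transpose_one, Matrix.mul_zero,
    Matrix.zero_mul, Matrix.mul_one, Matrix.one_mul, add_zero, zero_add,
    Matrix.fromCols_mul_fromBlocks, Matrix.fromBlocks_mul_fromRows, Matrix.fromRows_mul_fromCols,
    Matrix.fromBlocks_add]
  rw [hM, hMB, hBM, hBB]
  simp only [Matrix.mul_neg, Matrix.mul_one, add_neg_cancel, hκ]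

def jEquiv (N : ℕ) : (Fin N ⊕ (Fin 2 ⊕ Fin N)) ≃ (Fin (N + 1) ⊕ Fin (N + 1)) where
  toFun
    | .inl a => .inl a.castSucc
    | .inr (.inl i) => if i = 0 then .inl (Fin.last N) else .inr (Fin.last N)
    | .inr (.inr b) => .inr b.castSucc
  invFun
    | .inl a => if h : a = Fin.last N then .inr (.inl 0) else .inl (a.castPred h)
    | .inr b => if h : b = Fin.last N then .inr (.inl 1) else .inr (.inr (b.castPred h))
  left_inv x := by
    rcases x with a | i | b
    · simp [(Fin.castSucc_lt_last a).ne]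
    · fin_cases i <;> simp
    · simp [(Fin.castSucc_lt_last b).ne]
  right_inv x := by
    rcases x with a | b
    · by_cases h : a = Fin.last N <;> simp [h]
    · by_cases h : b = Fin.last N <;> simp [h]

lemma reindex_jEquiv_jForm (N : ℕ) : reindex (jEquiv N) (jEquiv N) (jForm N) = Jsymp N := by
  rw [← Equiv.eq_symm_apply, reindex_symm]
  ext x y
  rcases x with a | i | a <;> rcases y with b | j | b <;> (try fin_cases i) <;>
    (try fin_cases j) <;>
    simp [jEquiv, jForm, Jsymp, J2, Matrix.one_apply, (Fin.castSucc_lt_last _).ne,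
      (Fin.castSucc_lt_last _).ne']

lemma Matrix.reindex_transpose_mul_mul {m n R : Type*} [Fintype m] [Fintype n]
    [AddCommMonoid R] [Mul R] (e : m ≃ n) (A B : Matrix m m R) :
    reindex e e (Aᵀ * B * A) = (reindex e e A)ᵀ * reindex e e B * reindex e e A := by
  simp [Matrix.transpose_submatrix, Matrix.submatrix_mul_equiv]

theorem exists_perm_conj_symplectic_general (N : ℕ) :
    ∃ e : (Fin N ⊕ (Fin 2 ⊕ Fin N)) ≃ (Fin (N + 1) ⊕ Fin (N + 1)),
      ∀ g : JTriple N, g.IsMem →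
        (Matrix.reindex e e (jIota g)).transpose * Jsymp N * Matrix.reindex e e (jIota g) =
          Jsymp N := by
  refine ⟨jEquiv N, fun g hg => ?_⟩
  rw [← reindex_jEquiv_jForm, ← Matrix.reindex_transpose_mul_mul,
    jIota_transpose_mul_jForm_mul_jIota hg]

/-- There is a permutation of the 2N+2 indices (i.e. a conjugation by a permutation matrix
`P ∈ GL_{2N+2}(ℝ)`) carrying every `ι(M,X,κ)`, `(M,X,κ) ∈ G̃^J_N`, to a symplectic matrix:
`gᵀ·J_{2N+2}·g = J_{2N+2}`. -/
theorem exists_perm_conj_symplectic (N : ℕ) (hN : 1 ≤ N) :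
    ∃ e : (Fin N ⊕ (Fin 2 ⊕ Fin N)) ≃ (Fin (N + 1) ⊕ Fin (N + 1)),
      ∀ g : JTriple N, g.IsMem →
        (Matrix.reindex e e (jIota g)).transpose * Jsymp N * Matrix.reindex e e (jIota g) =
          Jsymp N :=
  exists_perm_conj_symplectic_general N
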